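/- arXiv:2308.13848 — 3 statements merged into one kernel-verified Lean document; each statement's English description precedes it below -/
import Mathlib

section
/- Let I₁ > 0, V_T > 0, R_Σ > 0, and j₁ ≥ 0. The equation I₁ = (j₁ − i + I₁) · exp(−(R_Σ/V_T)·i) in the unknown i has the unique solution i* = j₁ + I₁ − (V_T/R_Σ)·W₀( I₁·(R_Σ/V_T)·exp((R_Σ/V_T)·(j₁ + I₁)) ), where W₀ is the principal branch of the Lambert W function; moreover 0 ≤ i* ≤ j₁. -/
open Real

/-!
With `a = Rtot / V_T`, multiplying the equation by `a · exp(a (j₁ + I₁))` turns it into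
`u · e^u = I₁ a e^{a (j₁ + I₁)}` for `u = a (j₁ + I₁ - i)`. Since `x ↦ x e^x` is negative on
`(-∞, 0)` and strictly increasing on `[0, ∞)`, this has the single solution `u = W₀(…)`.
The same monotonicity locates `W₀(…)` between `a I₁` and `a (j₁ + I₁)`, which is `0 ≤ i* ≤ j₁`.
-/

lemma strictMonoOn_mul_exp : StrictMonoOn (fun x : ℝ => x * exp x) (Set.Ici 0) :=
  fun _ hx _ _ hxy => mul_lt_mul hxy (exp_le_exp.2 hxy.le) (exp_pos _) (le_trans hx hxy.le)

lemma nonneg_of_mul_exp_nonneg {x : ℝ} (h : 0 ≤ x * exp x) : 0 ≤ x :=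
  nonneg_of_mul_nonneg_left h (exp_pos x)

section LambertW

variable {W : ℝ → ℝ} (hW : ∀ y : ℝ, 0 ≤ y → 0 ≤ W y ∧ W y * exp (W y) = y)
  {x y : ℝ} (hy : 0 ≤ y)
include hW hy

lemma mul_exp_eq_iff_eq_lambertW : x * exp x = y ↔ x = W y := by
  obtain ⟨hW0, hWy⟩ := hW y hy
  constructor
  · intro hx
    have hx0 : 0 ≤ x := nonneg_of_mul_exp_nonneg (hx ▸ hy)
    exact strictMonoOn_mul_exp.injOn hx0 hW0 (hx.trans hWy.symm)
  · rintro rfl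
    exact hWy

lemma le_lambertW_iff (hx : 0 ≤ x) : x ≤ W y ↔ x * exp x ≤ y := by
  obtain ⟨hW0, hWy⟩ := hW y hy
  conv_rhs => rw [← hWy]
  exact (strictMonoOn_mul_exp.le_iff_le hx hW0).symm

lemma lambertW_le_iff (hx : 0 ≤ x) : W y ≤ x ↔ y ≤ x * exp x := by
  obtain ⟨hW0, hWy⟩ := hW y hy
  conv_rhs => rw [← hWy]
  exact (strictMonoOn_mul_exp.le_iff_le hW0 hx).symm

end LambertW

lemma eq_mul_exp_neg_iff {a I j i : ℝ} (ha : a ≠ 0) :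
    I = (j - i + I) * exp (-a * i) ↔
      a * (j + I - i) * exp (a * (j + I - i)) = I * a * exp (a * (j + I)) := by
  have hsplit : exp (a * (j + I - i)) = exp (a * (j + I)) * exp (-a * i) := by
    rw [← exp_add]; ring_nf
  have hfactor : a * exp (a * (j + I)) ≠ 0 := mul_ne_zero ha (exp_pos _).ne'
  rw [hsplit, eq_comm]
  constructor
  · intro h; linear_combination a * exp (a * (j + I)) * h
  · intro h
    apply mul_left_cancel₀ hfactor
    linear_combination h

/-- The output-current equation `I₁ = (j₁ − i + I₁) exp(−(Rtot/V_T) i)` of a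
single-junction photovoltaic receiver has the unique solution
`i* = j₁ + I₁ − (V_T/Rtot) W₀(I₁ (Rtot/V_T) exp((Rtot/V_T)(j₁+I₁)))`, which
moreover satisfies `0 ≤ i* ≤ j₁`. `W` is the principal Lambert W branch,
characterized on `[0,∞)` by `W y ≥ 0` and `W y · e^{W y} = y`. -/
theorem stmt3 (I₁ V_T Rtot j₁ : ℝ) (hI : 0 < I₁) (hV : 0 < V_T) (hR : 0 < Rtot)
    (hj : 0 ≤ j₁) (W : ℝ → ℝ)
    (hW : ∀ y : ℝ, 0 ≤ y → 0 ≤ W y ∧ W y * exp (W y) = y) :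
    (∀ i : ℝ,
      I₁ = (j₁ - i + I₁) * exp (-(Rtot / V_T) * i) ↔
        i = j₁ + I₁ - (V_T / Rtot) * W (I₁ * (Rtot / V_T) * exp ((Rtot / V_T) * (j₁ + I₁)))) ∧
    0 ≤ j₁ + I₁ - (V_T / Rtot) * W (I₁ * (Rtot / V_T) * exp ((Rtot / V_T) * (j₁ + I₁))) ∧
    j₁ + I₁ - (V_T / Rtot) * W (I₁ * (Rtot / V_T) * exp ((Rtot / V_T) * (j₁ + I₁))) ≤ j₁ := by
  set a := Rtot / V_T
  have ha : 0 < a := div_pos hR hV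
  have hVR : V_T / Rtot = a⁻¹ := (inv_div Rtot V_T).symm
  set y := I₁ * a * exp (a * (j₁ + I₁))
  have hy : 0 ≤ y := by positivity
  have hlower : a * I₁ ≤ W y := by
    rw [le_lambertW_iff hW hy (by positivity)]
    calc a * I₁ * exp (a * I₁) ≤ a * I₁ * exp (a * (j₁ + I₁)) := by gcongr; linarith
      _ = y := by ring
  have hupper : W y ≤ a * (j₁ + I₁) := by
    rw [lambertW_le_iff hW hy (by positivity)]
    calc y = a * I₁ * exp (a * (j₁ + I₁)) := by ring
      _ ≤ a * (j₁ + I₁) * exp (a * (j₁ + I₁)) := by gcongr; linarith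
  rw [hVR]
  refine ⟨fun i => ?_, ?_, ?_⟩
  · rw [eq_mul_exp_neg_iff ha.ne', mul_exp_eq_iff_eq_lambertW hW hy]
    constructor
    · intro h; rw [← h]; field_simp; ring
    · intro h; rw [h]; field_simp; ring
  · rw [sub_nonneg, inv_mul_le_iff₀ ha]; exact hupper
  · rw [add_sub_assoc, add_le_iff_nonpos_right, sub_nonpos, le_inv_mul_iff₀ ha]; exact hlower
end

section
/- Under the multi-junction logarithmic EH model, the maximum achievable rate R̄(A²) = (1/2)·ln(1 + θ(A²)²/(2πeσ²)), with θ(A²) = c·ln(1 + (j^a + hrA²)/I) − c·ln(1 + j^a/I) and c = V_T√R_L/R_Σ > 0, is strictly increasing in A² and satisfies R̄(A²) = O(ln ln A²) as A² → ∞; i.e., R̄(A²)/ln ln(A²) → 1·(coefficient 1) in the sense that R̄(A²) − ln ln(A²) remains bounded as A² → ∞. -/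
open Real Filter Topology

/-!
`θ(A²)` is `c` times the logarithm of an increasing affine function of `A²`, so the rate is a
composition of increasing maps. Moreover `θ(A²) = c ln A² + O(1)`, hence
`1 + θ²/K ~ (c²/K) (ln A²)²` with `K = 2πeσ²`, and `R̄(A²) − ln ln A²` even converges,
to `½ ln (c²/K)`.
-/

lemma strictMonoOn_log_affine {a b : ℝ} (ha : 0 < a) (hb : 0 < b) :
    StrictMonoOn (fun x => log (a + b * x)) (Set.Ici 0) := by
  intro x hx y _ hxy
  have hx : 0 ≤ x := hx
  exact log_lt_log (by positivity) (by gcongr)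

lemma tendsto_log_affine_sub_log (a : ℝ) {b : ℝ} (hb : 0 < b) :
    Tendsto (fun x => log (a + b * x) - log x) atTop (𝓝 (log b)) := by
  have h := (tendsto_log_comp_add_sub_log (a / b)).const_add (log b)
  rw [add_zero] at h
  refine h.congr' ?_
  filter_upwards [eventually_gt_atTop (-(a / b))] with x hx
  have hfactor : a + b * x = b * (x + a / b) := by field_simp; ring
  rw [hfactor, log_mul hb.ne' (by linarith)]
  ring

lemma strictMonoOn_half_log_one_add_sq_div {K : ℝ} (hK : 0 < K) :
    StrictMonoOn (fun t => (1 / 2) * log (1 + t ^ 2 / K)) (Set.Ici 0) := by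
  intro s hs t _ hst
  have hs : 0 ≤ s := hs
  have : log (1 + s ^ 2 / K) < log (1 + t ^ 2 / K) :=
    log_lt_log (by positivity) (by gcongr)
  linarith

lemma Filter.Tendsto.div_of_tendsto_sub_mul {α : Type*} {l : Filter α} {f g : α → ℝ}
    {c D : ℝ} (hf : Tendsto (fun x => f x - c * g x) l (𝓝 D)) (hg : Tendsto g l atTop) :
    Tendsto (fun x => f x / g x) l (𝓝 c) := by
  have h := (hf.div_atTop hg).add_const c
  rw [zero_add] at h
  refine h.congr' ?_
  filter_upwards [hg.eventually_ne_atTop 0] with x hx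
  field_simp
  ring

lemma tendsto_half_log_one_add_sq_div_sub_log {α : Type*} {l : Filter α} {f g : α → ℝ}
    {c D K : ℝ} (hc : c ≠ 0) (hK : 0 < K) (hf : Tendsto (fun x => f x - c * g x) l (𝓝 D))
    (hg : Tendsto g l atTop) :
    Tendsto (fun x => (1 / 2) * log (1 + f x ^ 2 / K) - log (g x)) l
      (𝓝 ((1 / 2) * log (c ^ 2 / K))) := by
  have hratio : Tendsto (fun x => (1 + f x ^ 2 / K) / g x ^ 2) l (𝓝 (c ^ 2 / K)) := by
    have h := ((tendsto_inv_atTop_zero.comp hg).pow 2).add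
      (((hf.div_of_tendsto_sub_mul hg).pow 2).div_const K)
    rw [zero_pow two_ne_zero, zero_add] at h
    refine h.congr' ?_
    filter_upwards [hg.eventually_ne_atTop 0] with x hx
    simp only [Function.comp_apply]
    field_simp
  refine ((hratio.log (by positivity)).const_mul (1 / 2)).congr' ?_
  filter_upwards [hg.eventually_gt_atTop 0] with x hx
  rw [log_div (by positivity) (by positivity), log_pow]
  push_cast
  ring

/-- Under the multi-junction logarithmic EH model, the maximum achievable rate
`R̄(A²) = ½ ln(1 + θ(A²)²/(2πeσ²))`, with
`θ(A²) = c ln(1 + (jₐ + h r A²)/I) − c ln(1 + jₐ/I)`, is strictly increasing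
in `A²` on `[0,∞)` and `R̄(A²) − ln ln A²` remains bounded as `A² → ∞`. -/
theorem stmt13 (c I h r ja σ : ℝ) (hc : 0 < c) (hI : 0 < I) (hσ : 0 < σ)
    (hja : 0 ≤ ja) (hhr : 0 < h * r)
    (R : ℝ → ℝ)
    (hR : R = fun A2 => (1 / 2) * Real.log (1 +
      (c * Real.log (1 + (ja + h * r * A2) / I) - c * Real.log (1 + ja / I)) ^ 2 /
        (2 * π * exp 1 * σ ^ 2))) :
    StrictMonoOn R (Set.Ici 0) ∧
    ∃ M : ℝ, ∀ᶠ A2 in atTop, |R A2 - Real.log (Real.log A2)| ≤ M := by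
  set a := 1 + ja / I
  set b := h * r / I
  have ha : 0 < a := by positivity
  have hb : 0 < b := div_pos hhr hI
  set θ : ℝ → ℝ := fun x => c * log (a + b * x) - c * log a
  have hRθ : R = fun x => (1 / 2) * log (1 + θ x ^ 2 / (2 * π * exp 1 * σ ^ 2)) := by
    have haffine : ∀ x, 1 + (ja + h * r * x) / I = a + b * x := fun x => by
      simp only [a, b]; ring
    simp only [hR, haffine, θ]
  have hθ_mono : StrictMonoOn θ (Set.Ici 0) := fun x hx y hy hxy =>
    sub_lt_sub_right (mul_lt_mul_of_pos_left (strictMonoOn_log_affine ha hb hx hy hxy) hc) _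
  have hθ_nonneg : Set.MapsTo θ (Set.Ici 0) (Set.Ici 0) := fun x hx => by
    simpa [θ] using hθ_mono.monotoneOn Set.self_mem_Ici hx hx
  have hθ_log : Tendsto (fun x => θ x - c * log x) atTop (𝓝 (c * log b - c * log a)) := by
    refine (((tendsto_log_affine_sub_log a hb).const_mul c).sub_const (c * log a)).congr ?_
    intro x; simp only [θ]; ring
  rw [hRθ]
  refine ⟨(strictMonoOn_half_log_one_add_sq_div (by positivity)).comp hθ_mono hθ_nonneg, ?_⟩
  have hlim := tendsto_half_log_one_add_sq_div_sub_log (K := 2 * π * exp 1 * σ ^ 2) hc.ne'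
    (by positivity) hθ_log tendsto_log_atTop
  obtain ⟨M, hM⟩ := hlim.abs.isBoundedUnder_le
  exact ⟨M, hM⟩
end

section
/- For the Lambert-W based single-junction EH model, the harvested current g(j) = j + I − (V_T/R_Σ)·W₀( I·(R_Σ/V_T)·e^{(R_Σ/V_T)(j+I)} ) satisfies g(j) − (V_T/R_Σ)·ln((j+I)/I) → 0 as j → ∞; hence the harvested power R_L·g(j)² grows only like (ln j)² for large j. -/
open Real Filter

/-- Asymptotics of the Lambert-W based single-junction EH model: as `j → ∞`,
`g(j) − (V_T/Rtot) ln((j+I)/I) → 0`, and hence the harvested power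
`R_L g(j)²` grows like `(ln j)²`:
`R_L g(j)²/(ln j)² → R_L (V_T/Rtot)²`. -/
theorem stmt14 (I V_T Rtot R_L : ℝ) (hI : 0 < I) (hV : 0 < V_T) (hR : 0 < Rtot)
    (hRL : 0 < R_L) (W : ℝ → ℝ)
    (hW : ∀ y : ℝ, 0 ≤ y → 0 ≤ W y ∧ W y * exp (W y) = y)
    (g : ℝ → ℝ)
    (hg : g = fun j => j + I - (V_T / Rtot) * W (I * (Rtot / V_T) * exp ((Rtot / V_T) * (j + I)))) :
    Tendsto (fun j => g j - (V_T / Rtot) * Real.log ((j + I) / I)) atTop (nhds 0) ∧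
    Tendsto (fun j => R_L * (g j) ^ 2 / (Real.log j) ^ 2) atTop
      (nhds (R_L * (V_T / Rtot) ^ 2)) := by
  set a := V_T / Rtot with ha
  set c := Rtot / V_T with hc
  have hapos : 0 < a := div_pos hV hR
  have hcpos : 0 < c := div_pos hR hV
  have hac : a * c = 1 := by
    rw [ha, hc, div_mul_div_comm, mul_comm V_T Rtot, div_self (by positivity)]
  set u : ℝ → ℝ := fun j => W (I * c * exp (c * (j + I))) with hu
  set s : ℝ → ℝ := fun j => c * (j + I) with hs
  set L : ℝ → ℝ := fun j => s j + Real.log (I * c) with hL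
  have hy : ∀ j, 0 < I * c * exp (c * (j + I)) := fun j =>
    mul_pos (mul_pos hI hcpos) (exp_pos _)
  have hupos : ∀ j, 0 < u j := by
    intro j
    simp only [hu]
    rcases hW _ (hy j).le with ⟨h0, h1⟩
    rcases h0.lt_or_eq with h | h
    · exact h
    · exfalso
      rw [← h, zero_mul] at h1
      exact (hy j).ne' h1.symm
  have hlogu : ∀ j, Real.log (u j) + u j = L j := by
    intro j
    simp only [hu, hL, hs]
    rcases hW _ (hy j).le with ⟨h0, h1⟩
    have h2 := congrArg Real.log h1
    rw [Real.log_mul (ne_of_gt (hupos j)) (exp_ne_zero _), Real.log_exp,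
        Real.log_mul (by positivity) (exp_ne_zero _), Real.log_exp] at h2
    linarith [hupos j]
  clear_value a c u s L
  have hstop : Tendsto s atTop atTop := by
    simp only [hs]
    exact (tendsto_atTop_add_const_right _ I tendsto_id).const_mul_atTop hcpos
  have hLtop : Tendsto L atTop atTop := by
    rw [hL]; exact tendsto_atTop_add_const_right _ _ hstop
  -- bounds on u
  have hub : ∀ j, 1 ≤ L j → u j ≤ L j := by
    intro j h1
    by_contra h
    push_neg at h
    have hge1 : (1:ℝ) ≤ u j := le_of_lt (lt_of_le_of_lt h1 h)
    have : Real.log (u j) = L j - u j := by linarith [hlogu j]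
    have hlt : Real.log (u j) < 0 := by rw [this]; linarith
    exact absurd (Real.log_nonneg hge1) (not_le.mpr hlt)
  have hlb : ∀ j, 1 ≤ L j → L j - Real.log (L j) ≤ u j := by
    intro j h1
    have h2 := hub j h1
    have h3 : Real.log (u j) ≤ Real.log (L j) := Real.log_le_log (hupos j) h2
    linarith [hlogu j]
  -- ratio tends to 1
  have hlogdiv : Tendsto (fun x : ℝ => Real.log x / x) atTop (nhds 0) :=
    Real.isLittleO_log_id_atTop.tendsto_div_nhds_zero
  have hLs : Tendsto (fun j => L j / s j) atTop (nhds 1) := by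
    have h1 : Tendsto (fun j => 1 + Real.log (I * c) / s j) atTop (nhds (1 + 0)) :=
      tendsto_const_nhds.add (tendsto_const_nhds.div_atTop hstop)
    rw [add_zero] at h1
    refine h1.congr' ?_
    filter_upwards [hstop.eventually_gt_atTop 0] with j hj
    rw [hL]
    field_simp
  have hlogLs : Tendsto (fun j => Real.log (L j) / s j) atTop (nhds 0) := by
    have h1 : Tendsto (fun j => (Real.log (L j) / L j) * (L j / s j)) atTop
        (nhds (0 * 1)) := (hlogdiv.comp hLtop).mul hLs
    rw [zero_mul] at h1
    refine h1.congr' ?_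
    filter_upwards [hLtop.eventually_gt_atTop 0, hstop.eventually_gt_atTop 0] with j hj hj'
    field_simp
  have hr : Tendsto (fun j => u j / s j) atTop (nhds 1) := by
    have hlower : Tendsto (fun j => L j / s j - Real.log (L j) / s j) atTop (nhds (1 - 0)) :=
      hLs.sub hlogLs
    rw [sub_zero] at hlower
    refine tendsto_of_tendsto_of_tendsto_of_le_of_le' hlower hLs ?_ ?_
    · filter_upwards [hLtop.eventually_ge_atTop 1, hstop.eventually_gt_atTop 0] with j h1 h2
      rw [div_sub_div_same]
      exact div_le_div_of_nonneg_right (hlb j h1) h2.le |>.trans_eq rfl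
    · filter_upwards [hLtop.eventually_ge_atTop 1, hstop.eventually_gt_atTop 0] with j h1 h2
      exact div_le_div_of_nonneg_right (hub j h1) h2.le
  -- first part
  have key : ∀ᶠ j in atTop, g j - a * Real.log ((j + I) / I) = a * Real.log (u j / s j) := by
    filter_upwards [eventually_gt_atTop 0] with j hj
    have hjI : 0 < j + I := by linarith
    have hs' : 0 < s j := by simp only [hs]; exact mul_pos hcpos hjI
    have h1 : u j = s j + (Real.log I + Real.log c) - Real.log (u j) := by
      have h2 : Real.log (u j) + u j = s j + Real.log (I * c) := by
        have := hlogu j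
        simp only [hL] at this
        exact this
      rw [Real.log_mul (ne_of_gt hI) (ne_of_gt hcpos)] at h2
      linarith
    rw [hg]
    simp only
    rw [Real.log_div (ne_of_gt (hupos j)) (ne_of_gt hs'),
        Real.log_div (ne_of_gt hjI) (ne_of_gt hI)]
    have hlogs : Real.log (s j) = Real.log c + Real.log (j + I) := by
      simp only [hs]
      exact Real.log_mul (ne_of_gt hcpos) (ne_of_gt hjI)
    have huW : W (I * c * exp (c * (j + I))) = u j := by simp only [hu]
    rw [huW, hlogs]
    have hsj : s j = c * (j + I) := by simp only [hs]
    linear_combination (-a) * h1 - a * hsj - (j + I) * hac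
  have part1 : Tendsto (fun j => g j - a * Real.log ((j + I) / I)) atTop (nhds 0) := by
    have hlog1 : Tendsto (fun j => Real.log (u j / s j)) atTop (nhds 0) := by
      have := (Real.continuousAt_log one_ne_zero).tendsto.comp hr
      rwa [Real.log_one] at this
    have h2 : Tendsto (fun j => a * Real.log (u j / s j)) atTop (nhds (a * 0)) :=
      hlog1.const_mul a
    rw [mul_zero] at h2
    exact h2.congr' (key.mono fun j hj => hj.symm)
  refine ⟨part1, ?_⟩
  -- second part
  have hIdiv : Tendsto (fun j : ℝ => I / j) atTop (nhds 0) :=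
    tendsto_const_nhds.div_atTop tendsto_id
  have hlr : Tendsto (fun j : ℝ => Real.log (j + I) / Real.log j) atTop (nhds 1) := by
    have hinner : Tendsto (fun j : ℝ => Real.log (1 + I / j)) atTop (nhds 0) := by
      have h1 : Tendsto (fun j : ℝ => 1 + I / j) atTop (nhds 1) := by
        have h0 : Tendsto (fun j : ℝ => 1 + I / j) atTop (nhds (1 + 0)) :=
          tendsto_const_nhds.add hIdiv
        rwa [add_zero] at h0
      have := (Real.continuousAt_log one_ne_zero).tendsto.comp h1
      rwa [Real.log_one] at this
    have h2 : Tendsto (fun j : ℝ => 1 + Real.log (1 + I / j) / Real.log j) atTop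
        (nhds (1 + 0)) := tendsto_const_nhds.add (hinner.div_atTop Real.tendsto_log_atTop)
    rw [add_zero] at h2
    refine h2.congr' ?_
    filter_upwards [eventually_gt_atTop 1] with j hj
    have hj0 : (0:ℝ) < j := by linarith
    have h3 : (0:ℝ) < 1 + I / j := by positivity
    have h4 : Real.log (j + I) = Real.log j + Real.log (1 + I / j) := by
      rw [← Real.log_mul (ne_of_gt hj0) (ne_of_gt h3)]
      congr 1
      field_simp
    have hlj : Real.log j ≠ 0 := ne_of_gt (Real.log_pos hj)
    rw [h4, add_div, div_self hlj]
  have ht : Tendsto (fun j => g j / Real.log j) atTop (nhds a) := by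
    have h1 : Tendsto (fun j => (g j - a * Real.log ((j + I) / I)) / Real.log j) atTop
        (nhds 0) := part1.div_atTop Real.tendsto_log_atTop
    have h2 : Tendsto (fun j : ℝ => a * (Real.log (j + I) / Real.log j)
        - a * (Real.log I / Real.log j)) atTop (nhds (a * 1 - a * 0)) :=
      (hlr.const_mul a).sub ((tendsto_const_nhds.div_atTop Real.tendsto_log_atTop).const_mul a)
    have h3 : Tendsto (fun j : ℝ => (g j - a * Real.log ((j + I) / I)) / Real.log j
        + (a * (Real.log (j + I) / Real.log j) - a * (Real.log I / Real.log j))) atTop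
        (nhds (0 + (a * 1 - a * 0))) := h1.add h2
    rw [mul_one, mul_zero, sub_zero, zero_add] at h3
    refine h3.congr' ?_
    filter_upwards [eventually_gt_atTop 1] with j hj
    have hj0 : (0:ℝ) < j := by linarith
    have hjI : 0 < j + I := by linarith
    have hlj : Real.log j ≠ 0 := ne_of_gt (Real.log_pos hj)
    rw [Real.log_div (ne_of_gt hjI) (ne_of_gt hI)]
    field_simp
    ring
  have h4 : Tendsto (fun j => R_L * (g j / Real.log j) ^ 2) atTop
      (nhds (R_L * a ^ 2)) := (ht.pow 2).const_mul R_L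
  refine h4.congr' ?_
  filter_upwards [eventually_gt_atTop 1] with j hj
  have hlj : Real.log j ≠ 0 := ne_of_gt (Real.log_pos hj)
  field_simp
end
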